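/- Let q, z ∈ ℂ with 0 < |q| < 1 and z ≠ 0, and for m ∈ ℕ let H_m(z;q) := Σ_{j=0}^{m} [m choose j]_q z^{m−2j} denote the continuous q-Hermite polynomial. Then for every n ∈ ℕ, Σ_{s=0}^{n} (−1)^{n−s} q^{(n−s)(n−s−1)/2} / ((q;q)_s² (q;q)_{n−s}) · Σ_{u_1=0}^{s} Σ_{u_2=0}^{s} [s choose u_1]_q [s choose u_2]_q z^{2u_1−2u_2} = (1/(q;q)_n²) Σ_{j=0}^{2n} [2n choose j]_q z^{2j−2n}; equivalently, Σ_{s=0}^{n} (−1)^{n−s} q^{(n−s)(n−s−1)/2} H_s(z;q)² / ((q;q)_s² (q;q)_{n−s}) = H_{2n}(z;q) / (q;q)_n². -/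

import Mathlib

/-!
Rogers' linearization formula `H_m H_n = Σ_k [m,k]_q [n,k]_q (q;q)_k H_{m+n-2k}`, which follows
from the three-term recurrence of the `H_m` alone, makes `H_s² / (q;q)_s²` the `s`-th coefficient
of the product of the power series `e_q(x) = Σ xᵏ / (q;q)_k` and `Σ_j H_{2j} xʲ / (q;q)_j²`.
The sum to be evaluated is the `n`-th coefficient of that product times
`E_q(-x) = Σ (-1)ᵏ q^(k(k-1)/2) xᵏ / (q;q)_k`, and `e_q(x) E_q(-x) = 1` because the functional
equations `e_q(qx) = (1 - x) e_q(x)` and `E_q(-x) = (1 - x) E_q(-qx)` make the product invariant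
under `x ↦ qx`. The explicit form is the same identity, read through `H_m(z⁻¹) = H_m(z)`.
-/

open Finset

/-- Finite q-Pochhammer symbol `(a;q)_n`. -/
noncomputable def qPoch (a q : ℂ) (n : ℕ) : ℂ := ∏ i ∈ Finset.range n, (1 - a * q ^ i)

/-- q-binomial coefficient. -/
noncomputable def qBinom (q : ℂ) (M N : ℕ) : ℂ :=
  if N ≤ M then qPoch q q M / (qPoch q q N * qPoch q q (M - N)) else 0

/-- The continuous q-Hermite polynomial `H_m(z;q) = Σ_{j=0}^m [m choose j]_q z^{m-2j}`. -/
noncomputable def qHermite (q z : ℂ) (m : ℕ) : ℂ :=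
  ∑ j ∈ Finset.range (m + 1), qBinom q m j * z ^ ((m : ℤ) - 2 * (j : ℤ))

open PowerSeries

lemma one_sub_pow_ne_zero {R : Type*} [Ring R] {q : R} (hq : ¬IsOfFinOrder q) {n : ℕ}
    (hn : n ≠ 0) : 1 - q ^ n ≠ 0 :=
  fun h => hq (isOfFinOrder_iff_pow_eq_one.2 ⟨n, Nat.pos_of_ne_zero hn, (sub_eq_zero.1 h).symm⟩)

section qBinom

variable {q : ℂ}

lemma qPoch_self_ne_zero (hq : ¬IsOfFinOrder q) (n : ℕ) : qPoch q q n ≠ 0 :=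
  prod_ne_zero_iff.2 fun i _ => by
    rw [← pow_succ']
    exact one_sub_pow_ne_zero hq i.succ_ne_zero

@[simp]
lemma qPoch_zero (a : ℂ) : qPoch a q 0 = 1 := prod_range_zero _

lemma qPoch_self_succ (n : ℕ) : qPoch q q (n + 1) = qPoch q q n * (1 - q ^ (n + 1)) := by
  rw [qPoch, prod_range_succ, ← qPoch, pow_succ']

lemma qBinom_of_add {M a b : ℕ} (h : a + b = M) :
    qBinom q M a = qPoch q q M / (qPoch q q a * qPoch q q b) := by
  subst h
  rw [qBinom, if_pos (Nat.le_add_right a b), Nat.add_sub_cancel_left]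

lemma qBinom_of_lt {M N : ℕ} (h : M < N) : qBinom q M N = 0 := by
  rw [qBinom, if_neg (not_le.2 h)]

lemma qBinom_zero_right (hq : ¬IsOfFinOrder q) (M : ℕ) : qBinom q M 0 = 1 := by
  rw [qBinom_of_add (zero_add M), qPoch_zero, one_mul, div_self (qPoch_self_ne_zero hq M)]

lemma qBinom_self (hq : ¬IsOfFinOrder q) (M : ℕ) : qBinom q M M = 1 := by
  rw [qBinom_of_add (add_zero M), qPoch_zero, mul_one, div_self (qPoch_self_ne_zero hq M)]

lemma qBinom_symm {M N : ℕ} (h : N ≤ M) : qBinom q M (M - N) = qBinom q M N := by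
  rw [qBinom_of_add (Nat.sub_add_cancel h), qBinom_of_add (Nat.add_sub_cancel' h), mul_comm]

end qBinom

section pascal

variable {q : ℂ}

lemma qBinom_succ_succ (hq : ¬IsOfFinOrder q) (n k : ℕ) :
    qBinom q (n + 1) (k + 1) = qBinom q n (k + 1) + q ^ (n - k) * qBinom q n k := by
  rcases lt_trichotomy k n with h | rfl | h
  · obtain ⟨d, rfl⟩ := Nat.exists_eq_add_of_lt h
    rw [qBinom_of_add (show k + 1 + (d + 1) = k + d + 1 + 1 by omega),
      qBinom_of_add (show k + 1 + d = k + d + 1 by omega),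
      qBinom_of_add (show k + (d + 1) = k + d + 1 by omega),
      show k + d + 1 - k = d + 1 by omega, qPoch_self_succ (k + d + 1), qPoch_self_succ k,
      qPoch_self_succ d]
    have := one_sub_pow_ne_zero hq k.succ_ne_zero
    have := one_sub_pow_ne_zero hq d.succ_ne_zero
    field_simp [qPoch_self_ne_zero hq]
    ring
  · rw [qBinom_self hq, qBinom_of_lt k.lt_succ_self, qBinom_self hq, Nat.sub_self, pow_zero]
    ring
  · rw [qBinom_of_lt (by omega), qBinom_of_lt (by omega), qBinom_of_lt h]
    ring

lemma qBinom_succ_mul_qPoch_succ (hq : ¬IsOfFinOrder q) (m k : ℕ) :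
    qBinom q m (k + 1) * qPoch q q (k + 1) = (1 - q ^ (m - k)) * qBinom q m k * qPoch q q k := by
  rcases lt_trichotomy k m with h | rfl | h
  · obtain ⟨d, rfl⟩ := Nat.exists_eq_add_of_lt h
    rw [qBinom_of_add (show k + 1 + d = k + d + 1 by omega),
      qBinom_of_add (show k + (d + 1) = k + d + 1 by omega),
      show k + d + 1 - k = d + 1 by omega, qPoch_self_succ d]
    have := one_sub_pow_ne_zero hq d.succ_ne_zero
    field_simp [qPoch_self_ne_zero hq]
  · rw [qBinom_of_lt k.lt_succ_self, Nat.sub_self, pow_zero]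
    ring
  · rw [qBinom_of_lt (by omega), qBinom_of_lt h]
    ring

lemma one_sub_pow_succ_mul_qBinom (hq : ¬IsOfFinOrder q) (n k : ℕ) :
    (1 - q ^ (n + 1)) * qBinom q n k = (1 - q ^ (n + 1 - k)) * qBinom q (n + 1) k := by
  rcases le_or_gt k n with h | h
  · obtain ⟨d, rfl⟩ := Nat.exists_eq_add_of_le h
    rw [qBinom_of_add rfl, qBinom_of_add (show k + (d + 1) = k + d + 1 by omega),
      show k + d + 1 - k = d + 1 by omega, qPoch_self_succ (k + d), qPoch_self_succ d]
    have := one_sub_pow_ne_zero hq d.succ_ne_zero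
    field_simp [qPoch_self_ne_zero hq]
  · rcases (Nat.succ_le_of_lt h).eq_or_lt with rfl | h'
    · rw [qBinom_of_lt h, Nat.sub_self, pow_zero]
      ring
    · rw [qBinom_of_lt h, qBinom_of_lt h']
      ring

end pascal

section linearization

variable {q : ℂ}

noncomputable def linCoeff (q : ℂ) (m n k : ℕ) : ℂ := qBinom q m k * qBinom q n k * qPoch q q k

lemma linCoeff_zero_right (hq : ¬IsOfFinOrder q) (m n : ℕ) : linCoeff q m n 0 = 1 := by
  rw [linCoeff, qBinom_zero_right hq, qBinom_zero_right hq, qPoch_zero, one_mul, one_mul]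

lemma linCoeff_of_lt (m : ℕ) {n k : ℕ} (h : n < k) : linCoeff q m n k = 0 := by
  rw [linCoeff, qBinom_of_lt h, mul_zero, zero_mul]

lemma linCoeff_succ_succ (hq : ¬IsOfFinOrder q) (m n k : ℕ) :
    linCoeff q m (n + 2) (k + 1) = linCoeff q m (n + 1) (k + 1) +
      (1 - q ^ (m + n + 1 - 2 * k)) * linCoeff q m (n + 1) k -
      (1 - q ^ (n + 1)) * linCoeff q m n k := by
  unfold linCoeff
  by_cases hk : k ≤ m ∧ k ≤ n + 1
  · have hpascal := qBinom_succ_succ hq (n + 1) k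
    have hpoch := qBinom_succ_mul_qPoch_succ hq m k
    have habsorb := one_sub_pow_succ_mul_qBinom hq n k
    rw [show m + n + 1 - 2 * k = (n + 1 - k) + (m - k) by omega, pow_add, hpascal]
    linear_combination (q ^ (n + 1 - k) * qBinom q (n + 1) k) * hpoch +
      (qBinom q m k * qPoch q q k) * habsorb
  · rw [not_and_or, not_le, not_le] at hk
    rcases hk with hk | hk
    · simp [qBinom_of_lt hk, qBinom_of_lt (hk.trans k.lt_succ_self)]
    · simp [qBinom_of_lt hk, qBinom_of_lt (n.lt_succ_self.trans hk),
        qBinom_of_lt (by omega : n + 2 < k + 1), qBinom_of_lt (by omega : n + 1 < k + 1)]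

lemma sum_linCoeff_step (hq : ¬IsOfFinOrder q) {x : ℂ} {H : ℕ → ℂ}
    (hrec : ∀ a, H (a + 2) = x * H (a + 1) - (1 - q ^ (a + 1)) * H a) {m n : ℕ}
    (hnm : n + 2 ≤ m) :
    x * ∑ k ∈ range (n + 2), linCoeff q m (n + 1) k * H (m + (n + 1) - 2 * k) -
        (1 - q ^ (n + 1)) * ∑ k ∈ range (n + 1), linCoeff q m n k * H (m + n - 2 * k) =
      ∑ k ∈ range (n + 3), linCoeff q m (n + 2) k * H (m + (n + 2) - 2 * k) := by
  have hx : ∀ k ∈ range (n + 2), x * (linCoeff q m (n + 1) k * H (m + (n + 1) - 2 * k)) =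
      linCoeff q m (n + 1) k * H (m + (n + 2) - 2 * k) +
        (1 - q ^ (m + n + 1 - 2 * k)) * linCoeff q m (n + 1) k * H (m + n - 2 * k) := by
    intro k hk
    have h2k : 2 * k ≤ m + n := by rw [mem_range] at hk; omega
    rw [show m + (n + 2) - 2 * k = m + n - 2 * k + 2 by omega, hrec,
      show m + (n + 1) - 2 * k = m + n - 2 * k + 1 by omega,
      show m + n + 1 - 2 * k = m + n - 2 * k + 1 by omega]
    ring
  have hshift : ∀ k, m + (n + 2) - 2 * (k + 1) = m + n - 2 * k := by omega
  have hpad₁ : ∑ k ∈ range (n + 1), linCoeff q m (n + 1) (k + 1) * H (m + n - 2 * k) =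
      ∑ k ∈ range (n + 2), linCoeff q m (n + 1) (k + 1) * H (m + n - 2 * k) := by
    rw [sum_range_succ _ (n + 1), linCoeff_of_lt m (n + 1).lt_succ_self, zero_mul, add_zero]
  have hpad₂ : ∑ k ∈ range (n + 1), linCoeff q m n k * H (m + n - 2 * k) =
      ∑ k ∈ range (n + 2), linCoeff q m n k * H (m + n - 2 * k) := by
    rw [sum_range_succ _ (n + 1), linCoeff_of_lt m n.lt_succ_self, zero_mul, add_zero]
  have hcoeff : ∑ k ∈ range (n + 2), linCoeff q m (n + 2) (k + 1) * H (m + n - 2 * k) =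
      ∑ k ∈ range (n + 2), linCoeff q m (n + 1) (k + 1) * H (m + n - 2 * k) +
      ∑ k ∈ range (n + 2), (1 - q ^ (m + n + 1 - 2 * k)) * linCoeff q m (n + 1) k *
        H (m + n - 2 * k) -
      (1 - q ^ (n + 1)) * ∑ k ∈ range (n + 2), linCoeff q m n k * H (m + n - 2 * k) := by
    rw [mul_sum, ← sum_add_distrib, ← sum_sub_distrib]
    refine sum_congr rfl fun k _ => ?_
    rw [linCoeff_succ_succ hq]
    ring
  rw [mul_sum, sum_congr rfl hx, sum_add_distrib, sum_range_succ' _ (n + 1),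
    sum_range_succ' _ (n + 2)]
  simp only [hshift, linCoeff_zero_right hq]
  rw [hpad₁, hpad₂, hcoeff]
  ring

theorem mul_eq_sum_linCoeff (hq : ¬IsOfFinOrder q) {x : ℂ} {H : ℕ → ℂ} (h0 : H 0 = 1)
    (h1 : H 1 = x) (hrec : ∀ a, H (a + 2) = x * H (a + 1) - (1 - q ^ (a + 1)) * H a)
    {m n : ℕ} (hnm : n ≤ m) :
    H m * H n = ∑ k ∈ range (n + 1), linCoeff q m n k * H (m + n - 2 * k) := by
  induction n using Nat.twoStepInduction with
  | zero => simp [h0, linCoeff_zero_right hq]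
  | one =>
    obtain ⟨m, rfl⟩ := Nat.exists_eq_add_of_le' hnm
    have hpoch := qBinom_succ_mul_qPoch_succ hq (m + 1) 0
    simp only [zero_add, qBinom_zero_right hq, qPoch_zero, mul_one, Nat.sub_zero] at hpoch
    rw [sum_range_succ, sum_range_one, linCoeff_zero_right hq, linCoeff, qBinom_self hq, h1,
      show m + 1 + 1 - 2 * 0 = m + 2 by omega, show m + 1 + 1 - 2 * 1 = m by omega, hrec]
    linear_combination (-H m) * hpoch
  | more n ih0 ih1 =>
    calc H m * H (n + 2) = x * (H m * H (n + 1)) - (1 - q ^ (n + 1)) * (H m * H n) := by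
          rw [hrec]
          ring
      _ = _ := by
          rw [ih1 (by omega), ih0 (by omega)]
          exact sum_linCoeff_step hq hrec hnm

end linearization

section qHermite

variable {q z : ℂ}

lemma qHermite_eq_sum_range (q z : ℂ) {m N : ℕ} (h : m < N) :
    qHermite q z m = ∑ j ∈ range N, qBinom q m j * z ^ ((m : ℤ) - 2 * (j : ℤ)) := by
  refine sum_subset (range_subset_range.2 h) fun j _ hj => ?_
  rw [qBinom_of_lt (by simpa using hj), zero_mul]

lemma qHermite_zero (hq : ¬IsOfFinOrder q) : qHermite q z 0 = 1 := by
  simp [qHermite, qBinom_zero_right hq]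

lemma qHermite_one (hq : ¬IsOfFinOrder q) : qHermite q z 1 = z + z⁻¹ := by
  simp [qHermite, sum_range_succ, qBinom_zero_right hq, qBinom_self hq]

lemma qHermite_succ_succ (hq : ¬IsOfFinOrder q) (hz : z ≠ 0) (n : ℕ) :
    qHermite q z (n + 2) =
      (z + z⁻¹) * qHermite q z (n + 1) - (1 - q ^ (n + 1)) * qHermite q z n := by
  have hzH : z * qHermite q z (n + 1) =
      ∑ j ∈ range (n + 3), qBinom q (n + 1) j * z ^ (((n + 2 : ℕ) : ℤ) - 2 * (j : ℤ)) := by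
    rw [qHermite_eq_sum_range q z (by omega : n + 1 < n + 3), mul_sum]
    refine sum_congr rfl fun j _ => ?_
    rw [mul_left_comm, ← zpow_one_add₀ hz]
    push_cast
    ring_nf
  have hzH' : z⁻¹ * qHermite q z (n + 1) =
      ∑ j ∈ range (n + 2), qBinom q (n + 1) j * z ^ ((n : ℤ) - 2 * (j : ℤ)) := by
    rw [qHermite, mul_sum]
    refine sum_congr rfl fun j _ => ?_
    rw [mul_left_comm, ← zpow_neg_one, ← zpow_add₀ hz]
    push_cast
    ring_nf
  have hshift : ∀ (m j : ℕ), z ^ (((m + 2 : ℕ) : ℤ) - 2 * ((j + 1 : ℕ) : ℤ)) =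
      z ^ ((m : ℤ) - 2 * (j : ℤ)) := by
    intro m j
    push_cast
    ring_nf
  have hcoeff : ∀ j, qBinom q (n + 2) (j + 1) =
      qBinom q (n + 1) (j + 1) + qBinom q (n + 1) j - (1 - q ^ (n + 1)) * qBinom q n j := by
    intro j
    rw [qBinom_succ_succ hq, one_sub_pow_succ_mul_qBinom hq]
    ring
  rw [add_mul, hzH, hzH', qHermite, qHermite_eq_sum_range q z (by omega : n < n + 2),
    sum_range_succ' _ (n + 2), sum_range_succ' _ (n + 2)]
  simp only [hshift, hcoeff, qBinom_zero_right hq, add_mul, sub_mul, sum_add_distrib,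
    sum_sub_distrib, mul_sum, mul_assoc]
  ring

end qHermite

section qExp

variable {q : ℂ}

lemma coeff_zero_one_sub_X_mul {R : Type*} [Ring R] (f : R⟦X⟧) :
    coeff 0 ((1 - X) * f) = coeff 0 f := by
  rw [sub_mul, one_mul, map_sub, coeff_zero_X_mul, sub_zero]

lemma coeff_succ_one_sub_X_mul {R : Type*} [Ring R] (f : R⟦X⟧) (k : ℕ) :
    coeff (k + 1) ((1 - X) * f) = coeff (k + 1) f - coeff k f := by
  rw [sub_mul, one_mul, map_sub, coeff_succ_X_mul]

lemma eq_C_of_rescale_eq {R : Type*} [CommRing R] [NoZeroDivisors R] {a : R}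
    (ha : ¬IsOfFinOrder a) {f : R⟦X⟧} (hf : rescale a f = f) : f = C (constantCoeff f) := by
  ext (_ | k)
  · simp
  · have h := congrArg (coeff (k + 1)) hf
    rw [coeff_rescale] at h
    have : (1 - a ^ (k + 1)) * coeff (k + 1) f = 0 := by linear_combination -h
    rw [coeff_C, if_neg k.succ_ne_zero]
    exact (mul_eq_zero.1 this).resolve_left (one_sub_pow_ne_zero ha k.succ_ne_zero)

noncomputable def qExp (q : ℂ) : ℂ⟦X⟧ := mk fun k => (qPoch q q k)⁻¹

noncomputable def qExpInv (q : ℂ) : ℂ⟦X⟧ :=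
  mk fun k => (-1) ^ k * q ^ (k * (k - 1) / 2) / qPoch q q k

lemma rescale_qExp (hq : ¬IsOfFinOrder q) : rescale q (qExp q) = (1 - X) * qExp q := by
  ext (_ | k)
  · simp [qExp]
  · rw [coeff_succ_one_sub_X_mul, coeff_rescale, qExp, coeff_mk, coeff_mk, qPoch_self_succ]
    have := one_sub_pow_ne_zero hq k.succ_ne_zero
    field_simp [qPoch_self_ne_zero hq]
    ring

lemma qExpInv_eq_one_sub_X_mul_rescale (hq : ¬IsOfFinOrder q) :
    qExpInv q = (1 - X) * rescale q (qExpInv q) := by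
  ext (_ | k)
  · simp [coeff_zero_one_sub_X_mul, coeff_rescale, qExpInv]
  · rw [coeff_succ_one_sub_X_mul, coeff_rescale, coeff_rescale, qExpInv, coeff_mk, coeff_mk,
      qPoch_self_succ, Nat.triangle_succ]
    have := one_sub_pow_ne_zero hq k.succ_ne_zero
    field_simp [qPoch_self_ne_zero hq]
    ring

lemma qExp_mul_qExpInv (hq : ¬IsOfFinOrder q) : qExp q * qExpInv q = 1 := by
  have hfix : rescale q (qExp q * qExpInv q) = qExp q * qExpInv q := by
    rw [map_mul, rescale_qExp hq]
    conv_rhs => rw [qExpInv_eq_one_sub_X_mul_rescale hq]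
    ring
  rw [eq_C_of_rescale_eq hq hfix]
  simp [qExp, qExpInv]

end qExp

section evaluation

variable {q z : ℂ}

lemma mk_qHermite_sq_div_eq_qExp_mul (hq : ¬IsOfFinOrder q) (hz : z ≠ 0) :
    mk (fun s => qHermite q z s ^ 2 / qPoch q q s ^ 2) =
      qExp q * mk fun j => qHermite q z (2 * j) / qPoch q q j ^ 2 := by
  ext s
  rw [coeff_mk, coeff_mul, Nat.sum_antidiagonal_eq_sum_range_succ_mk, sq,
    mul_eq_sum_linCoeff hq (qHermite_zero hq) (qHermite_one hq) (qHermite_succ_succ hq hz) le_rfl,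
    sum_div]
  refine sum_congr rfl fun k hk => ?_
  have hk : k ≤ s := Nat.lt_succ_iff.1 (mem_range.1 hk)
  rw [qExp, coeff_mk, coeff_mk, linCoeff, qBinom_of_add (Nat.add_sub_cancel' hk),
    show s + s - 2 * k = 2 * (s - k) by omega]
  field_simp [qPoch_self_ne_zero hq]

theorem sum_qHermite_sq_div (hq : ¬IsOfFinOrder q) (hz : z ≠ 0) (n : ℕ) :
    ∑ s ∈ range (n + 1), (-1 : ℂ) ^ (n - s) * q ^ ((n - s) * (n - s - 1) / 2) *
        qHermite q z s ^ 2 / (qPoch q q s ^ 2 * qPoch q q (n - s)) =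
      qHermite q z (2 * n) / qPoch q q n ^ 2 := by
  have h : mk (fun s => qHermite q z s ^ 2 / qPoch q q s ^ 2) * qExpInv q =
      mk fun j => qHermite q z (2 * j) / qPoch q q j ^ 2 := by
    rw [mk_qHermite_sq_div_eq_qExp_mul hq hz, mul_comm (qExp q), mul_assoc, qExp_mul_qExpInv hq,
      mul_one]
  have h := congrArg (coeff n) h
  rw [coeff_mul, Nat.sum_antidiagonal_eq_sum_range_succ_mk, coeff_mk] at h
  rw [← h]
  refine sum_congr rfl fun s _ => ?_
  rw [qExpInv, coeff_mk, coeff_mk]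
  ring

lemma qHermite_eq_sum_reflect (q z : ℂ) (m : ℕ) :
    qHermite q z m = ∑ j ∈ range (m + 1), qBinom q m j * z ^ (2 * (j : ℤ) - m) := by
  rw [qHermite, ← sum_range_reflect]
  refine sum_congr rfl fun j hj => ?_
  have hj : j ≤ m := Nat.lt_succ_iff.1 (mem_range.1 hj)
  rw [Nat.add_sub_cancel, qBinom_symm hj, Nat.cast_sub hj]
  ring_nf

lemma qHermite_sq_eq_sum_sum (hz : z ≠ 0) (s : ℕ) :
    qHermite q z s ^ 2 = ∑ u₁ ∈ range (s + 1), ∑ u₂ ∈ range (s + 1),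
      qBinom q s u₁ * qBinom q s u₂ * z ^ (2 * (u₁ : ℤ) - 2 * (u₂ : ℤ)) := by
  rw [sq]
  nth_rw 1 [qHermite_eq_sum_reflect]
  rw [qHermite, sum_mul_sum]
  refine sum_congr rfl fun u₁ _ => sum_congr rfl fun u₂ _ => ?_
  rw [mul_mul_mul_comm, ← zpow_add₀ hz]
  ring_nf

end evaluation

theorem B_evaluation_general (q z : ℂ)
    (hq1 : ‖q‖ < 1) (hz : z ≠ 0) (n : ℕ) :
    (∑ s ∈ Finset.range (n + 1),
      (-1 : ℂ) ^ (n - s) * q ^ ((n - s) * (n - s - 1) / 2) /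
        (qPoch q q s ^ 2 * qPoch q q (n - s)) *
        ∑ u₁ ∈ Finset.range (s + 1), ∑ u₂ ∈ Finset.range (s + 1),
          qBinom q s u₁ * qBinom q s u₂ * z ^ (2 * (u₁ : ℤ) - 2 * (u₂ : ℤ))) =
      1 / qPoch q q n ^ 2 *
        ∑ j ∈ Finset.range (2 * n + 1),
          qBinom q (2 * n) j * z ^ (2 * (j : ℤ) - 2 * (n : ℤ)) ∧
    (∑ s ∈ Finset.range (n + 1),
      (-1 : ℂ) ^ (n - s) * q ^ ((n - s) * (n - s - 1) / 2) * qHermite q z s ^ 2 /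
        (qPoch q q s ^ 2 * qPoch q q (n - s))) =
      qHermite q z (2 * n) / qPoch q q n ^ 2 := by
  have hq : ¬IsOfFinOrder q := fun h => hq1.ne h.norm_eq_one
  have hsum := sum_qHermite_sq_div hq hz n
  refine ⟨?_, hsum⟩
  have hrhs := qHermite_eq_sum_reflect q z (2 * n)
  push_cast at hrhs
  simp_rw [← qHermite_sq_eq_sum_sum hz]
  rw [← hrhs, one_div_mul_eq_div, ← hsum]
  refine sum_congr rfl fun s _ => ?_
  ring

/-- Equation (5.5): the evaluation of the sum `B_n(z;q)` from Section 5, stated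
both in explicit form and in terms of continuous q-Hermite polynomials. -/
theorem B_evaluation (q z : ℂ)
    (hq0 : 0 < ‖q‖) (hq1 : ‖q‖ < 1) (hz : z ≠ 0) (n : ℕ) :
    (∑ s ∈ Finset.range (n + 1),
      (-1 : ℂ) ^ (n - s) * q ^ ((n - s) * (n - s - 1) / 2) /
        (qPoch q q s ^ 2 * qPoch q q (n - s)) *
        ∑ u₁ ∈ Finset.range (s + 1), ∑ u₂ ∈ Finset.range (s + 1),
          qBinom q s u₁ * qBinom q s u₂ * z ^ (2 * (u₁ : ℤ) - 2 * (u₂ : ℤ))) =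
      1 / qPoch q q n ^ 2 *
        ∑ j ∈ Finset.range (2 * n + 1),
          qBinom q (2 * n) j * z ^ (2 * (j : ℤ) - 2 * (n : ℤ)) ∧
    (∑ s ∈ Finset.range (n + 1),
      (-1 : ℂ) ^ (n - s) * q ^ ((n - s) * (n - s - 1) / 2) * qHermite q z s ^ 2 /
        (qPoch q q s ^ 2 * qPoch q q (n - s))) =
      qHermite q z (2 * n) / qPoch q q n ^ 2 :=
  B_evaluation_general q z hq1 hz n
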